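/- arXiv:2106.07245 — 3 statements merged into one kernel-verified Lean document; each statement's English description precedes it below -/
import Mathlib

section
/- Let n ≥ 1, N ≥ 1 and d ≥ 2N + 3n − 1 be integers. Let p_1, …, p_N ∈ ℂ³, p_i = (x_i, y_i, z_i), be points with (x_i, y_i) ≠ (0,0) for all i and with the classes [x_i : y_i] ∈ P¹ pairwise distinct (so the p_i represent N points of 𝔽_n, none on the exceptional section E_n, lying on N distinct lines of the ruling). Then the ℂ-linear evaluation map ev : V_{d,n} → Mat_{3×N}(ℂ), sending f to the matrix whose i-th column is (∂f/∂x(p_i), ∂f/∂y(p_i), ∂f/∂z(p_i)), is surjective. -/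
open MvPolynomial

noncomputable section

/-- The weights on the variables `x, y, z`: `deg x = deg y = 1`, `deg z = n`. -/
def wt (n : ℕ) : Fin 3 → ℕ := ![1, 1, n]

/-- The subspace of `ℂ[x,y,z]` of polynomials whose degree in `z` is at most `h`. -/
def degZle (h : ℕ) : Submodule ℂ (MvPolynomial (Fin 3) ℂ) where
  carrier := {f | f.degreeOf 2 ≤ h}
  zero_mem' := by simp [Set.mem_setOf_eq, degreeOf_zero]
  add_mem' := by
    intro f g hf hg
    exact le_trans (degreeOf_add_le _ _ _) (max_le hf hg)
  smul_mem' := by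
    intro c f hf
    rw [Set.mem_setOf_eq, smul_eq_C_mul]
    exact le_trans (degreeOf_C_mul_le _ _ _) hf

/-- `V^{(h)}_{d,n}`: the space of polynomials in `ℂ[x,y,z]` that are weighted homogeneous of
degree `d` for the weights `deg x = deg y = 1`, `deg z = n`, and have degree at most `h` in `z`.
This is the space of global sections of `O(hEₙ + dFₙ)` on the Hirzebruch surface `𝔽ₙ`. -/
def Vh (h d n : ℕ) : Submodule ℂ (MvPolynomial (Fin 3) ℂ) :=
  weightedHomogeneousSubmodule ℂ (wt n) d ⊓ degZle h

/-- `V_{d,n}`, the space of global sections of `O(3Eₙ + dFₙ)` on `𝔽ₙ`. -/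
def V (d n : ℕ) : Submodule ℂ (MvPolynomial (Fin 3) ℂ) := Vh 3 d n

/-- `f` is singular at the point `p`: all partial derivatives of `f` vanish at `p`. -/
def SingularAt {σ : Type*} (f : MvPolynomial σ ℂ) (p : σ → ℂ) : Prop :=
  ∀ i, eval p (pderiv i f) = 0

/-- The subspace of polynomials singular at every point of the family `p`. -/
def singSub {ι σ : Type*} (p : ι → σ → ℂ) : Submodule ℂ (MvPolynomial σ ℂ) where
  carrier := {f | ∀ j, SingularAt f (p j)}
  zero_mem' := by intro j i; simp
  add_mem' := by
    intro f g hf hg j i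
    simp [map_add, hf j i, hg j i]
  smul_mem' := by
    intro c f hf j i
    simp [smul_eq_C_mul, pderiv_C_mul, hf j i]

/-! Fix `j`, put `q = p j`, `M = d - 2(N-1)`, and let `Q = ∏_{k ≠ j} (y_k x - x_k y)`. Every
`Q² G` is singular at the `p k`, `k ≠ j`, so it suffices that the gradients at `q` of the sections
`Q² G`, `G ∈ V_{M,n}`, span `ℂ³`. By Euler's formula `x f_x + y f_y + n z f_z = d f`, sections
vanishing at `q` have gradients in a plane, and `Q² ℓ^M` has one off it since `d ≠ 0`; here `ℓ` is
a linear form in `x, y` with `ℓ(q) ≠ 0`. The plane is spanned by the gradients of `Q² ℓ^(M-1) m`,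
with `m` the fibre through `q`, and of `Q² ℓ^(M-n) (ℓ(q)^n z - z(q) ℓ^n)`. -/

section WeightedSections

variable {n : ℕ}

lemma mul_mem_Vh {f g : MvPolynomial (Fin 3) ℂ} {h h' d d' H D : ℕ} (hf : f ∈ Vh h d n)
    (hg : g ∈ Vh h' d' n) (hH : h + h' ≤ H) (hD : d + d' = D) : f * g ∈ Vh H D n := by
  obtain ⟨hfw, hfz⟩ := hf
  obtain ⟨hgw, hgz⟩ := hg
  refine ⟨hD ▸ (mem_weightedHomogeneousSubmodule _ _ _ _).2 (hfw.mul hgw), ?_⟩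
  exact (degreeOf_mul_le _ _ _).trans ((add_le_add hfz hgz).trans hH)

lemma one_mem_Vh : (1 : MvPolynomial (Fin 3) ℂ) ∈ Vh 0 0 n :=
  ⟨isWeightedHomogeneous_one ℂ _, by simp [degZle]⟩

lemma pow_mem_Vh {f : MvPolynomial (Fin 3) ℂ} {d : ℕ} (hf : f ∈ Vh 0 d n) (e : ℕ) :
    f ^ e ∈ Vh 0 (d * e) n := by
  induction e with
  | zero => exact one_mem_Vh
  | succ e ih => exact pow_succ f e ▸ mul_mem_Vh ih hf le_rfl (mul_add_one d e).symm

lemma prod_mem_Vh {ι : Type*} (s : Finset ι) (f : ι → MvPolynomial (Fin 3) ℂ) {d : ℕ}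
    (hf : ∀ i ∈ s, f i ∈ Vh 0 d n) : ∏ i ∈ s, f i ∈ Vh 0 (d * s.card) n := by
  classical
  induction s using Finset.induction_on with
  | empty => exact one_mem_Vh
  | insert i s hi ih =>
    rw [Finset.prod_insert hi, Finset.card_insert_of_notMem hi]
    exact mul_mem_Vh (hf i (s.mem_insert_self i)) (ih fun k hk => hf k (s.mem_insert_of_mem hk))
      le_rfl (by ring)

lemma X_two_mem_Vh : (X 2 : MvPolynomial (Fin 3) ℂ) ∈ Vh 1 n n :=
  ⟨by simpa [wt] using isWeightedHomogeneous_X ℂ (wt n) 2, by simp [degZle]⟩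

lemma X_mem_Vh_of_ne_two {i : Fin 3} (hi : i ≠ 2) :
    (X i : MvPolynomial (Fin 3) ℂ) ∈ Vh 0 1 n := by
  have hwt : wt n i = 1 := by fin_cases i <;> simp_all [wt]
  exact ⟨hwt ▸ isWeightedHomogeneous_X ℂ (wt n) i, by simp [degZle, degreeOf_X, hi.symm]⟩

lemma Vh_mono {h h' d : ℕ} (hh : h ≤ h') : Vh h d n ≤ Vh h' d n :=
  fun _ hf => ⟨hf.1, le_trans hf.2 hh⟩

end WeightedSections

def linXY (a b : ℂ) : MvPolynomial (Fin 3) ℂ := C a * X 0 + C b * X 1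

lemma linXY_mem_Vh (n : ℕ) (a b : ℂ) : linXY a b ∈ Vh 0 1 n := by
  simp only [linXY, ← smul_eq_C_mul]
  exact add_mem (Submodule.smul_mem _ _ (X_mem_Vh_of_ne_two (by decide)))
    (Submodule.smul_mem _ _ (X_mem_Vh_of_ne_two (by decide)))

@[simp]
lemma eval_linXY (a b : ℂ) (q : Fin 3 → ℂ) : eval q (linXY a b) = a * q 0 + b * q 1 := by
  simp [linXY]

lemma pderiv_linXY (a b : ℂ) (i : Fin 3) : pderiv i (linXY a b) = C (![a, b, 0] i) := by
  fin_cases i <;> simp [linXY, pderiv_X]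

lemma exists_eval_linXY_ne_zero {q : Fin 3 → ℂ} (hq : (q 0, q 1) ≠ (0, 0)) :
    ∃ a b : ℂ, eval q (linXY a b) ≠ 0 := by
  by_cases h : q 0 = 0
  · exact ⟨0, 1, by simp_all⟩
  · exact ⟨1, 0, by simpa using h⟩

section Gradient

variable {σ : Type*}

def gradAt (q : σ → ℂ) : MvPolynomial σ ℂ →ₗ[ℂ] σ → ℂ where
  toFun f i := eval q (pderiv i f)
  map_add' f g := by ext; simp
  map_smul' c f := by ext; simp

lemma gradAt_apply (q : σ → ℂ) (f : MvPolynomial σ ℂ) (i : σ) :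
    gradAt q f i = eval q (pderiv i f) := rfl

lemma gradAt_mul_of_eval_eq_zero {q : σ → ℂ} (f : MvPolynomial σ ℂ) {g : MvPolynomial σ ℂ}
    (hg : eval q g = 0) : gradAt q (f * g) = eval q f • gradAt q g := by
  ext i
  simp [gradAt_apply, hg]

lemma singularAt_mul {q : σ → ℂ} {f g : MvPolynomial σ ℂ} (hf : eval q f = 0)
    (hg : eval q g = 0) : SingularAt (f * g) q := by
  intro i
  simp [hf, hg]

end Gradient

lemma euler_gradAt {n d : ℕ} {f : MvPolynomial (Fin 3) ℂ}
    (hf : IsWeightedHomogeneous (wt n) f d) (q : Fin 3 → ℂ) :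
    q 0 * gradAt q f 0 + q 1 * gradAt q f 1 + n * q 2 * gradAt q f 2 = d * eval q f := by
  have := congrArg (eval q) hf.sum_weight_X_mul_pderiv
  simp only [Fin.sum_univ_three, wt, map_add, eval_mul, eval_X, nsmul_eq_mul] at this
  simp only [gradAt_apply]
  simpa [mul_assoc] using this

lemma exists_eq_mul_of_mul_add_mul_eq_zero {K : Type*} [Field K] {q₀ q₁ a b : K}
    (hq : (q₀, q₁) ≠ (0, 0)) (h : q₀ * a + q₁ * b = 0) : ∃ t, a = t * q₁ ∧ b = -(t * q₀) := by
  by_cases h₀ : q₀ = 0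
  · have h₁ : q₁ ≠ 0 := fun h₁ => hq (by rw [h₀, h₁])
    refine ⟨a / q₁, by field_simp, ?_⟩
    simp_all
  · refine ⟨-b / q₀, ?_, by field_simp⟩
    field_simp
    linear_combination h

lemma eq_top_of_mem_plane_of_mem_off_plane {K : Type*} [Field K] (S : Submodule K (Fin 3 → K))
    {q₀ q₁ c : K} (hq : (q₀, q₁) ≠ (0, 0)) (h₁ : ![q₁, -q₀, 0] ∈ S) {u : Fin 3 → K} (hu : u ∈ S)
    (hu₀ : q₀ * u 0 + q₁ * u 1 + c * u 2 = 0) (hu₂ : u 2 ≠ 0) {v : Fin 3 → K} (hv : v ∈ S)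
    (hv₀ : q₀ * v 0 + q₁ * v 1 + c * v 2 ≠ 0) : S = ⊤ := by
  have hker : ∀ w : Fin 3 → K, q₀ * w 0 + q₁ * w 1 + c * w 2 = 0 → w ∈ S := by
    intro w hw
    obtain ⟨t, ht₀, ht₁⟩ := exists_eq_mul_of_mul_add_mul_eq_zero hq
      (a := w 0 - w 2 / u 2 * u 0) (b := w 1 - w 2 / u 2 * u 1)
      (by field_simp; linear_combination u 2 * hw - w 2 * hu₀)
    have : w = t • ![q₁, -q₀, 0] + (w 2 / u 2) • u := by
      ext i
      fin_cases i <;> simp [sub_eq_iff_eq_add.1 ht₀, sub_eq_iff_eq_add.1 ht₁, hu₂]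
    exact this ▸ add_mem (S.smul_mem _ h₁) (S.smul_mem _ hu)
  refine eq_top_iff.2 fun x _ => ?_
  set s := (q₀ * x 0 + q₁ * x 1 + c * x 2) / (q₀ * v 0 + q₁ * v 1 + c * v 2)
  have : x = (x - s • v) + s • v := by abel
  refine this ▸ add_mem (hker _ ?_) (S.smul_mem _ hv)
  simp only [Pi.sub_apply, Pi.smul_apply, smul_eq_mul, s]
  field_simp
  ring

lemma map_gradAt_eq_top {n d : ℕ} {W : Submodule ℂ (MvPolynomial (Fin 3) ℂ)} {q : Fin 3 → ℂ}
    (hW : W ≤ weightedHomogeneousSubmodule ℂ (wt n) d) (hd : d ≠ 0) (hq : (q 0, q 1) ≠ (0, 0))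
    (h₁ : ∃ f ∈ W, gradAt q f = ![q 1, -q 0, 0])
    (h₂ : ∃ f ∈ W, eval q f = 0 ∧ gradAt q f 2 ≠ 0)
    (h₃ : ∃ f ∈ W, eval q f ≠ 0) : W.map (gradAt q) = ⊤ := by
  obtain ⟨f₁, hf₁, hg₁⟩ := h₁
  obtain ⟨f₂, hf₂, hf₂q, hg₂⟩ := h₂
  obtain ⟨f₃, hf₃, hf₃q⟩ := h₃
  refine eq_top_of_mem_plane_of_mem_off_plane _ hq (c := n * q 2)
    (hg₁ ▸ Submodule.mem_map_of_mem hf₁) (Submodule.mem_map_of_mem hf₂) ?_ hg₂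
    (Submodule.mem_map_of_mem hf₃) ?_
  · rw [euler_gradAt (hW hf₂), hf₂q, mul_zero]
  · rw [euler_gradAt (hW hf₃)]
    exact mul_ne_zero (Nat.cast_ne_zero.2 hd) hf₃q

section OnePoint

variable {n N : ℕ} (p : Fin N → Fin 3 → ℂ) (j : Fin N)

def prodOtherFibres : MvPolynomial (Fin 3) ℂ := ∏ k : {k // k ≠ j}, linXY (p k 1) (-p k 0)

lemma prodOtherFibres_mem_Vh : prodOtherFibres p j ∈ Vh 0 (N - 1) n := by
  simpa [prodOtherFibres] using prod_mem_Vh (n := n) Finset.univ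
    (fun k : {k // k ≠ j} => linXY (p k 1) (-p k 0)) fun k _ => linXY_mem_Vh n _ _

lemma eval_prodOtherFibres_of_ne {k : Fin N} (hk : k ≠ j) :
    eval (p k) (prodOtherFibres p j) = 0 := by
  rw [prodOtherFibres, map_prod]
  exact Finset.prod_eq_zero (i := ⟨k, hk⟩) (Finset.mem_univ _) (by rw [eval_linXY]; ring)

lemma eval_prodOtherFibres_ne_zero (hdist : ∀ k, k ≠ j → p j 0 * p k 1 ≠ p k 0 * p j 1) :
    eval (p j) (prodOtherFibres p j) ≠ 0 := by
  rw [prodOtherFibres, map_prod, Finset.prod_ne_zero_iff]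
  intro k _ hk
  rw [eval_linXY] at hk
  exact hdist k k.2 (by linear_combination hk)

lemma sq_prodOtherFibres_mul_mem {d M : ℕ} (hd : 2 * (N - 1) + M = d)
    {G : MvPolynomial (Fin 3) ℂ} (hG : G ∈ Vh 3 M n) :
    prodOtherFibres p j ^ 2 * G ∈ V d n ⊓ singSub fun k : {k // k ≠ j} => p k := by
  refine ⟨mul_mem_Vh (pow_mem_Vh (prodOtherFibres_mem_Vh p j) 2) hG le_rfl (by rw [← hd]; ring),
    fun k => ?_⟩
  have hk := eval_prodOtherFibres_of_ne p j k.2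
  rw [sq, mul_assoc]
  exact singularAt_mul hk (by simp [hk])

end OnePoint

theorem map_gradAt_V_inf_singSub_eq_top {n N d : ℕ} (p : Fin N → Fin 3 → ℂ) (j : Fin N)
    (hp : (p j 0, p j 1) ≠ (0, 0)) (hdist : ∀ k, k ≠ j → p j 0 * p k 1 ≠ p k 0 * p j 1)
    (hd : 2 * (N - 1) + max n 1 ≤ d) :
    (V d n ⊓ singSub fun k : {k // k ≠ j} => p k).map (gradAt (p j)) = ⊤ := by
  obtain ⟨M, rfl⟩ : ∃ M, d = 2 * (N - 1) + M := ⟨d - 2 * (N - 1), by omega⟩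
  obtain ⟨a, b, hℓ⟩ := exists_eval_linXY_ne_zero hp
  have hQ := eval_prodOtherFibres_ne_zero p j hdist
  set q := p j
  set ℓ := linXY a b
  set Q := prodOtherFibres p j
  have hℓpow (e : ℕ) : ℓ ^ e ∈ Vh 0 e n := by simpa using pow_mem_Vh (linXY_mem_Vh n a b) e
  refine map_gradAt_eq_top (fun f hf => hf.1.1) (by omega) hp ?_ ?_ ?_
  · set m := linXY (q 1) (-q 0)
    have hm : eval q m = 0 := by simp only [m, eval_linXY]; ring
    have hc : eval q (Q ^ 2 * ℓ ^ (M - 1)) ≠ 0 := by simp [hQ, hℓ]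
    refine ⟨(eval q (Q ^ 2 * ℓ ^ (M - 1)))⁻¹ • (Q ^ 2 * ℓ ^ (M - 1) * m),
      Submodule.smul_mem _ _ ?_, ?_⟩
    · rw [mul_assoc]
      exact sq_prodOtherFibres_mul_mem p j rfl
        (mul_mem_Vh (hℓpow _) (linXY_mem_Vh n _ _) (by omega) (by omega))
    · rw [map_smul, gradAt_mul_of_eval_eq_zero _ hm, smul_smul, inv_mul_cancel₀ hc, one_smul]
      ext i
      fin_cases i <;> simp [m, gradAt_apply, pderiv_linXY]
  · set K := C (eval q ℓ ^ n) * X 2 - C (q 2) * ℓ ^ n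
    have hK : eval q K = 0 := by simp only [K, map_sub, map_mul, map_pow, eval_C, eval_X]; ring
    have hKmem : K ∈ Vh 1 n n := by
      simp only [K, ← smul_eq_C_mul]
      exact sub_mem (Submodule.smul_mem _ _ X_two_mem_Vh)
        (Submodule.smul_mem _ _ (Vh_mono zero_le_one (hℓpow n)))
    refine ⟨Q ^ 2 * ℓ ^ (M - n) * K, ?_, by simp [hK], ?_⟩
    · rw [mul_assoc]
      exact sq_prodOtherFibres_mul_mem p j rfl (mul_mem_Vh (hℓpow _) hKmem (by omega) (by omega))
    · have hℓz : pderiv 2 ℓ = 0 := by simp [ℓ, pderiv_linXY]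
      rw [gradAt_mul_of_eval_eq_zero _ hK]
      simp [gradAt_apply, K, hℓz, hQ, hℓ]
  · refine ⟨Q ^ 2 * ℓ ^ M, sq_prodOtherFibres_mul_mem p j rfl (Vh_mono (by omega) (hℓpow M)), ?_⟩
    simp [hQ, hℓ]

theorem surjective_gradMatrix {ι σ : Type*} [Fintype ι] [DecidableEq ι]
    (S : Submodule ℂ (MvPolynomial σ ℂ)) (p : ι → σ → ℂ)
    (h : ∀ j, (S ⊓ singSub fun k : {k // k ≠ j} => p k).map (gradAt (p j)) = ⊤) :
    Function.Surjective fun f : S =>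
      Matrix.of fun i j => gradAt (p j) (f : MvPolynomial σ ℂ) i := by
  intro T
  choose f hf hfT using fun j =>
    Submodule.mem_map.1 ((h j).symm ▸ Submodule.mem_top (x := fun i => T i j))
  refine ⟨⟨∑ j, f j, sum_mem fun j _ => (Submodule.mem_inf.1 (hf j)).1⟩, ?_⟩
  ext i k
  change gradAt (p k) (∑ j, f j) i = T i k
  rw [map_sum, Finset.sum_apply, Finset.sum_eq_single k, hfT]
  · intro j _ hjk
    exact (Submodule.mem_inf.1 (hf j)).2 ⟨k, Ne.symm hjk⟩ i
  · simp

theorem ev_surjective_general (n N d : ℕ) (hd : 2 * N + 3 * n - 1 ≤ d)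
    (p : Fin N → Fin 3 → ℂ)
    (hp : ∀ j, (p j 0, p j 1) ≠ (0, 0))
    (hdist : ∀ j j', j ≠ j' → p j 0 * p j' 1 ≠ p j' 0 * p j 1) :
    Function.Surjective (fun f : V d n =>
      Matrix.of fun (i : Fin 3) (j : Fin N) =>
        eval (p j) (pderiv i (f : MvPolynomial (Fin 3) ℂ))) :=
  surjective_gradMatrix (V d n) p fun j =>
    map_gradAt_V_inf_singSub_eq_top p j (hp j) (fun k hk => hdist j k hk.symm)
      (by have := j.pos; omega)

/-- Lemma 2.5 (main case): for `n ≥ 1`, `N ≥ 1`, `d ≥ 2N + 3n - 1`, and `N` points of `𝔽ₙ`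
off the exceptional section and lying on pairwise distinct lines of the ruling, the evaluation
map `V_{d,n} → Mat_{3×N}(ℂ)`, sending `f` to the matrix of its partial derivatives at the
points, is surjective. -/
theorem ev_surjective (n N d : ℕ) (hn : 1 ≤ n) (hN : 1 ≤ N) (hd : 2 * N + 3 * n - 1 ≤ d)
    (p : Fin N → Fin 3 → ℂ)
    (hp : ∀ j, (p j 0, p j 1) ≠ (0, 0))
    (hdist : ∀ j j', j ≠ j' → p j 0 * p j' 1 ≠ p j' 0 * p j 1) :
    Function.Surjective (fun f : V d n =>
      Matrix.of fun (i : Fin 3) (j : Fin N) =>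
        eval (p j) (pderiv i (f : MvPolynomial (Fin 3) ℂ))) :=
  ev_surjective_general n N d hd p hp hdist

end
end

section
/- Let N ≥ 1 and d ≥ 2N − 1 be integers. Let p_1, …, p_N ∈ ℂ⁴, p_i = (X0_i, X1_i, Y0_i, Y1_i), with (X0_i, X1_i) ≠ (0,0), (Y0_i, Y1_i) ≠ (0,0) for all i, and with the classes [Y0_i : Y1_i] ∈ P¹ pairwise distinct (so the points lie on N distinct lines of the ruling of P¹×P¹). Then the ℂ-subspace {f ∈ W_d : f is singular at p_1, …, p_N} has dimension 4(d+1) − 3N; that is, being singular at the N points imposes exactly 3N independent linear conditions on W_d. -/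
/-!
Euler's identities `x₀ ∂₀f + x₁ ∂₁f = 3f` and `y₀ ∂₂f + y₁ ∂₃f = d f` show that `f ∈ W_d` is
singular at `q` as soon as `∂₀f(q) = ∂₁f(q) = 0` and one combination of `∂₂f(q), ∂₃f(q)`
independent of `q₂ ∂₂ + q₃ ∂₃` vanishes. So the singular subspace is the kernel of a linear map
`W_d → (ℂ³)ᴺ`, and it suffices to show that this map is onto. Multiplying by the squares of the
equations of the rulings through the other points kills the conditions there; as
`e = d - 2(N - 1) ≥ 1`, the three conditions at the remaining point can then be prescribed freely
by forms of bidegree `(3, e)` built from lines through it.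
-/

open MvPolynomial

noncomputable section

/-- Weights recording the degree in the variables `x₀, x₁` on `ℂ[x₀,x₁,y₀,y₁]`. -/
def wx : Fin 4 → ℕ := ![1, 1, 0, 0]

/-- Weights recording the degree in the variables `y₀, y₁` on `ℂ[x₀,x₁,y₀,y₁]`. -/
def wy : Fin 4 → ℕ := ![0, 0, 1, 1]

/-- `W_d`: the space of bihomogeneous polynomials of bidegree `(3, d)` in `ℂ[x₀,x₁,y₀,y₁]`,
i.e. the space of global sections of `O(3,d)` on `ℙ¹ × ℙ¹ ≅ 𝔽₀`. -/
def W (d : ℕ) : Submodule ℂ (MvPolynomial (Fin 4) ℂ) :=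
  weightedHomogeneousSubmodule ℂ wx 3 ⊓ weightedHomogeneousSubmodule ℂ wy d

open ComplexConjugate

lemma Complex.conj_mul_add_conj_mul_ne_zero {z w : ℂ} (h : (z, w) ≠ (0, 0)) :
    conj z * z + conj w * w ≠ 0 := by
  rw [← Complex.normSq_eq_conj_mul_self, ← Complex.normSq_eq_conj_mul_self]
  intro hsum
  obtain ⟨hz, hw⟩ := (add_eq_zero_iff_of_nonneg (Complex.normSq_nonneg z)
    (Complex.normSq_nonneg w)).mp (by exact_mod_cast hsum)
  exact h (by rw [Complex.normSq_eq_zero.mp hz, Complex.normSq_eq_zero.mp hw])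

lemma eq_zero_of_conj_mul_sub_conj_mul_eq_zero {z w a b : ℂ} (h : (z, w) ≠ (0, 0))
    (h₁ : z * a + w * b = 0) (h₂ : conj w * a - conj z * b = 0) : a = 0 ∧ b = 0 := by
  have hD := Complex.conj_mul_add_conj_mul_ne_zero h
  constructor
  · exact mul_left_cancel₀ hD (by linear_combination conj z * h₁ + w * h₂)
  · exact mul_left_cancel₀ hD (by linear_combination conj w * h₁ - z * h₂)

lemma Submodule.eq_top_of_mem_fin_three {K : Type*} [Field K] {S : Submodule K (Fin 3 → K)}
    {z w : K} {v : Fin 3 → K} (h₁ : ![w, -z, 0] ∈ S) (h₂ : ![0, 0, 1] ∈ S) (h₃ : v ∈ S)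
    (hv : z * v 0 + w * v 1 ≠ 0) : S = ⊤ := by
  refine eq_top_iff'.mpr fun x => ?_
  set D := z * v 0 + w * v 1
  set γ := (z * x 0 + w * x 1) / D
  have hx : x = ((v 1 * x 0 - v 0 * x 1) / D) • ![w, -z, 0] + (x 2 - γ * v 2) • ![0, 0, 1] +
      γ • v := by
    ext k
    fin_cases k <;> simp [γ] <;> field_simp <;> ring
  rw [hx]
  exact add_mem (add_mem (S.smul_mem _ h₁) (S.smul_mem _ h₂)) (S.smul_mem _ h₃)

lemma MvPolynomial.IsWeightedHomogeneous.pderiv_eq_zero {σ R : Type*} [CommSemiring R]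
    {w : σ → ℕ} {φ : MvPolynomial σ R} (h : φ.IsWeightedHomogeneous w 0) {i : σ} (hi : w i ≠ 0) :
    pderiv i φ = 0 := by
  ext m
  rw [coeff_pderiv, coeff_zero, h.coeff_eq_zero, zero_mul]
  simp [Finsupp.weight_single, hi]

lemma weight_wx (m : Fin 4 →₀ ℕ) : Finsupp.weight wx m = m 0 + m 1 := by
  simp [Finsupp.weight_eq_sum, Fin.sum_univ_four, wx]

lemma weight_wy (m : Fin 4 →₀ ℕ) : Finsupp.weight wy m = m 2 + m 3 := by
  simp [Finsupp.weight_eq_sum, Fin.sum_univ_four, wy]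

lemma weightedHomogeneousSubmodule_wx_inf_wy (K : Type*) [CommSemiring K] (a b : ℕ) :
    weightedHomogeneousSubmodule K wx a ⊓ weightedHomogeneousSubmodule K wy b =
      restrictSupport K {m | m 0 + m 1 = a ∧ m 2 + m 3 = b} := by
  ext f
  simp only [Submodule.mem_inf, mem_weightedHomogeneousSubmodule, mem_restrictSupport_iff,
    IsWeightedHomogeneous, weight_wx, weight_wy, Set.subset_def, Finset.mem_coe, mem_support_iff,
    Set.mem_ofPred_eq]
  exact ⟨fun h m hm => ⟨h.1 hm, h.2 hm⟩, fun h => ⟨fun m hm => (h m hm).1, fun m hm => (h m hm).2⟩⟩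

lemma natCard_bidegree_exponents (a b : ℕ) :
    Nat.card {m : Fin 4 →₀ ℕ | m 0 + m 1 = a ∧ m 2 + m 3 = b} = (a + 1) * (b + 1) := by
  let e : Fin (a + 1) × Fin (b + 1) → Fin 4 →₀ ℕ := fun ij =>
    Finsupp.equivFunOnFinite.symm ![ij.1, a - ij.1, ij.2, b - ij.2]
  have he : Function.Injective e := by
    rintro ⟨i, j⟩ ⟨i', j'⟩ h
    have h0 := DFunLike.congr_fun h 0
    have h2 := DFunLike.congr_fun h 2
    simp only [e, Finsupp.coe_equivFunOnFinite_symm] at h0 h2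
    ext <;> simp_all
  have hrange : Set.range e = {m : Fin 4 →₀ ℕ | m 0 + m 1 = a ∧ m 2 + m 3 = b} := by
    ext m
    constructor
    · rintro ⟨⟨i, j⟩, rfl⟩
      simp [e]
      omega
    · rintro ⟨ha, hb⟩
      refine ⟨(⟨m 0, by omega⟩, ⟨m 2, by omega⟩), ?_⟩
      ext k
      fin_cases k <;> simp [e] <;> omega
  rw [← hrange, Nat.card_range_of_injective he]
  simp

lemma finrank_W (d : ℕ) : Module.finrank ℂ (W d) = 4 * (d + 1) := by
  rw [W, weightedHomogeneousSubmodule_wx_inf_wy,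
    Module.finrank_eq_nat_card_basis (basisRestrictSupport ℂ _), natCard_bidegree_exponents]

instance (d : ℕ) : FiniteDimensional ℂ (W d) :=
  Module.finite_of_finrank_pos (by rw [finrank_W]; omega)

lemma MvPolynomial.IsWeightedHomogeneous.eval_euler_wx {f : MvPolynomial (Fin 4) ℂ} {a : ℕ}
    (hf : f.IsWeightedHomogeneous wx a) (q : Fin 4 → ℂ) :
    q 0 * eval q (pderiv 0 f) + q 1 * eval q (pderiv 1 f) = a * eval q f := by
  simpa [Fin.sum_univ_four, wx] using congrArg (eval q) hf.sum_weight_X_mul_pderiv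

lemma MvPolynomial.IsWeightedHomogeneous.eval_euler_wy {f : MvPolynomial (Fin 4) ℂ} {b : ℕ}
    (hf : f.IsWeightedHomogeneous wy b) (q : Fin 4 → ℂ) :
    q 2 * eval q (pderiv 2 f) + q 3 * eval q (pderiv 3 f) = b * eval q f := by
  simpa [Fin.sum_univ_four, wy] using congrArg (eval q) hf.sum_weight_X_mul_pderiv

def evalPDeriv {σ : Type*} (q : σ → ℂ) (i : σ) : MvPolynomial σ ℂ →ₗ[ℂ] ℂ :=
  (aeval q).toLinearMap ∘ₗ (pderiv i).toLinearMap

@[simp]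
lemma evalPDeriv_apply {σ : Type*} (q : σ → ℂ) (i : σ) (f : MvPolynomial σ ℂ) :
    evalPDeriv q i f = eval q (pderiv i f) := by
  simp [evalPDeriv]

-- The third functional is independent of the Euler combination `q₂ ∂₂ + q₃ ∂₃` for every
-- `(q₂, q₃) ≠ 0`.
def localConditions (q : Fin 4 → ℂ) : MvPolynomial (Fin 4) ℂ →ₗ[ℂ] Fin 3 → ℂ :=
  LinearMap.pi ![evalPDeriv q 0, evalPDeriv q 1,
    conj (q 3) • evalPDeriv q 2 - conj (q 2) • evalPDeriv q 3]

lemma localConditions_apply (q : Fin 4 → ℂ) (f : MvPolynomial (Fin 4) ℂ) :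
    localConditions q f = ![eval q (pderiv 0 f), eval q (pderiv 1 f),
      conj (q 3) * eval q (pderiv 2 f) - conj (q 2) * eval q (pderiv 3 f)] := by
  ext k
  fin_cases k <;> simp [localConditions]

lemma singularAt_iff_localConditions_eq_zero {d : ℕ} {f : MvPolynomial (Fin 4) ℂ} (hf : f ∈ W d)
    {q : Fin 4 → ℂ} (hq : (q 2, q 3) ≠ (0, 0)) :
    SingularAt f q ↔ localConditions q f = 0 := by
  rw [localConditions_apply]
  constructor
  · intro h
    simp [h 0, h 1, h 2, h 3]
  · intro h
    have h₀ : eval q (pderiv 0 f) = 0 := congrFun h 0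
    have h₁ : eval q (pderiv 1 f) = 0 := congrFun h 1
    have h₂ : conj (q 3) * eval q (pderiv 2 f) - conj (q 2) * eval q (pderiv 3 f) = 0 :=
      congrFun h 2
    have hfq : eval q f = 0 := by
      simpa [h₀, h₁] using IsWeightedHomogeneous.eval_euler_wx hf.1 q
    have hy : q 2 * eval q (pderiv 2 f) + q 3 * eval q (pderiv 3 f) = 0 := by
      simpa [hfq] using IsWeightedHomogeneous.eval_euler_wy hf.2 q
    obtain ⟨h₂', h₃⟩ := eq_zero_of_conj_mul_sub_conj_mul_eq_zero hq hy h₂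
    intro i
    fin_cases i
    exacts [h₀, h₁, h₂', h₃]

def singularityMap {ι : Type*} (p : ι → Fin 4 → ℂ) :
    MvPolynomial (Fin 4) ℂ →ₗ[ℂ] ι → Fin 3 → ℂ :=
  LinearMap.pi fun j => localConditions (p j)

lemma W_inf_singSub {ι : Type*} (d : ℕ) (p : ι → Fin 4 → ℂ) (hp : ∀ j, (p j 2, p j 3) ≠ (0, 0)) :
    W d ⊓ singSub p = W d ⊓ LinearMap.ker (singularityMap p) := by
  ext f
  simp only [Submodule.mem_inf, LinearMap.mem_ker, and_congr_right_iff]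
  intro hf
  rw [funext_iff]
  exact forall_congr' fun j => singularAt_iff_localConditions_eq_zero hf (hp j)

def xForm (a b : ℂ) : MvPolynomial (Fin 4) ℂ := C a * X 0 + C b * X 1

def yForm (a b : ℂ) : MvPolynomial (Fin 4) ℂ := C a * X 2 + C b * X 3

-- `f ∈ W d` unfolds to `IsBihomogeneous f 3 d`.
def IsBihomogeneous (f : MvPolynomial (Fin 4) ℂ) (a b : ℕ) : Prop :=
  f.IsWeightedHomogeneous wx a ∧ f.IsWeightedHomogeneous wy b

namespace IsBihomogeneous

variable {f g : MvPolynomial (Fin 4) ℂ} {a b a' b' : ℕ}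

lemma of_eq (h : IsBihomogeneous f a b) (ha : a = a') (hb : b = b') : IsBihomogeneous f a' b' :=
  ha ▸ hb ▸ h

lemma mul (hf : IsBihomogeneous f a b) (hg : IsBihomogeneous g a' b') :
    IsBihomogeneous (f * g) (a + a') (b + b') :=
  ⟨hf.1.mul hg.1, hf.2.mul hg.2⟩

lemma pow (hf : IsBihomogeneous f a b) (n : ℕ) : IsBihomogeneous (f ^ n) (n * a) (n * b) :=
  ⟨by simpa using hf.1.pow n, by simpa using hf.2.pow n⟩

lemma prod {ι : Type*} (s : Finset ι) {φ : ι → MvPolynomial (Fin 4) ℂ}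
    (h : ∀ i ∈ s, IsBihomogeneous (φ i) a b) :
    IsBihomogeneous (∏ i ∈ s, φ i) (s.card * a) (s.card * b) :=
  ⟨by simpa using IsWeightedHomogeneous.prod s φ (fun _ => a) fun i hi => (h i hi).1,
    by simpa using IsWeightedHomogeneous.prod s φ (fun _ => b) fun i hi => (h i hi).2⟩

end IsBihomogeneous

lemma isBihomogeneous_xForm (a b : ℂ) : IsBihomogeneous (xForm a b) 1 0 :=
  ⟨((isWeightedHomogeneous_X ℂ wx 0).C_mul a).add ((isWeightedHomogeneous_X ℂ wx 1).C_mul b),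
    ((isWeightedHomogeneous_X ℂ wy 0).C_mul a).add ((isWeightedHomogeneous_X ℂ wy 1).C_mul b)⟩

lemma isBihomogeneous_yForm (a b : ℂ) : IsBihomogeneous (yForm a b) 0 1 :=
  ⟨((isWeightedHomogeneous_X ℂ wx 2).C_mul a).add ((isWeightedHomogeneous_X ℂ wx 3).C_mul b),
    ((isWeightedHomogeneous_X ℂ wy 2).C_mul a).add ((isWeightedHomogeneous_X ℂ wy 3).C_mul b)⟩

@[simp]
lemma eval_xForm (q : Fin 4 → ℂ) (a b : ℂ) : eval q (xForm a b) = a * q 0 + b * q 1 := by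
  simp [xForm]

@[simp]
lemma eval_yForm (q : Fin 4 → ℂ) (a b : ℂ) : eval q (yForm a b) = a * q 2 + b * q 3 := by
  simp [yForm]

lemma localConditions_xForm (q : Fin 4 → ℂ) (a b : ℂ) :
    localConditions q (xForm a b) = ![a, b, 0] := by
  rw [localConditions_apply]
  simp [xForm, pderiv_X]

lemma localConditions_yForm (q : Fin 4 → ℂ) (a b : ℂ) :
    localConditions q (yForm a b) = (conj (q 3) * a - conj (q 2) * b) • ![0, 0, 1] := by
  rw [localConditions_apply]
  simp [yForm, pderiv_X]

lemma localConditions_mul_of_eval_eq_zero {q : Fin 4 → ℂ} {g : MvPolynomial (Fin 4) ℂ}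
    (hg : eval q g = 0) (f : MvPolynomial (Fin 4) ℂ) :
    localConditions q (f * g) = eval q f • localConditions q g := by
  rw [localConditions_apply, localConditions_apply]
  ext k
  fin_cases k <;> simp [hg]
  ring

lemma localConditions_sq_mul_of_eval_eq_zero {q : Fin 4 → ℂ} {f : MvPolynomial (Fin 4) ℂ}
    (hf : eval q f = 0) (g : MvPolynomial (Fin 4) ℂ) : localConditions q (f ^ 2 * g) = 0 := by
  rw [sq, mul_right_comm, localConditions_mul_of_eval_eq_zero hf]
  simp [hf]

lemma localConditions_mul_euler {q : Fin 4 → ℂ} {Q g : MvPolynomial (Fin 4) ℂ} {a : ℕ}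
    (hQ : Q.IsWeightedHomogeneous wx 0) (hg : g.IsWeightedHomogeneous wx a) :
    q 0 * localConditions q (Q * g) 0 + q 1 * localConditions q (Q * g) 1 =
      a * eval q Q * eval q g := by
  have hQ₀ : pderiv 0 Q = 0 := hQ.pderiv_eq_zero one_ne_zero
  have hQ₁ : pderiv 1 Q = 0 := hQ.pderiv_eq_zero one_ne_zero
  simp only [localConditions_apply, pderiv_mul, hQ₀, hQ₁, zero_mul, zero_add, map_mul,
    Matrix.cons_val_zero, Matrix.cons_val_one]
  linear_combination eval q Q * IsWeightedHomogeneous.eval_euler_wx hg q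

def xLine (q : Fin 4 → ℂ) : MvPolynomial (Fin 4) ℂ := xForm (q 1) (-q 0)

def yLine (q : Fin 4 → ℂ) : MvPolynomial (Fin 4) ℂ := yForm (q 3) (-q 2)

lemma eval_xLine_self (q : Fin 4 → ℂ) : eval q (xLine q) = 0 := by
  simp [xLine]
  ring

lemma eval_yLine_self (q : Fin 4 → ℂ) : eval q (yLine q) = 0 := by
  simp [yLine]
  ring

lemma exists_mem_W_localConditions_mul_eq {q : Fin 4 → ℂ} (hqx : (q 0, q 1) ≠ (0, 0))
    (hqy : (q 2, q 3) ≠ (0, 0)) {Q : MvPolynomial (Fin 4) ℂ} (hQ : Q.IsWeightedHomogeneous wx 0)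
    (hQq : eval q Q ≠ 0) {e : ℕ} (he : e ≠ 0) (x : Fin 3 → ℂ) :
    ∃ g ∈ W e, localConditions q (Q * g) = x := by
  set S := (W e).map (localConditions q ∘ₗ LinearMap.mulLeft ℂ Q)
  have hS : ∀ g ∈ W e, localConditions q (Q * g) ∈ S := fun g hg => Submodule.mem_map_of_mem hg
  set μ := xForm (conj (q 0)) (conj (q 1))
  set m := yForm (conj (q 2)) (conj (q 3))
  have hμ : eval q μ ≠ 0 := by
    simpa [μ, mul_comm] using Complex.conj_mul_add_conj_mul_ne_zero hqx
  have hm : eval q m ≠ 0 := by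
    simpa [m, mul_comm] using Complex.conj_mul_add_conj_mul_ne_zero hqy
  have hμm : ∀ a b, IsBihomogeneous (μ ^ a * m ^ b) a b := fun a b =>
    (((isBihomogeneous_xForm _ _).pow a).mul ((isBihomogeneous_yForm _ _).pow b)).of_eq
      (by ring) (by ring)
  have hc : eval q (Q * (μ ^ 2 * m ^ e)) ≠ 0 := by simp [hQq, hμ, hm]
  have hD : eval q (Q * (μ ^ 3 * m ^ (e - 1))) * (conj (q 3) * q 3 - conj (q 2) * -q 2) ≠ 0 := by
    have := Complex.conj_mul_add_conj_mul_ne_zero hqy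
    rw [add_comm] at this
    simpa [hQq, hμ, hm] using this
  have h₁ : ![q 1, -q 0, 0] ∈ S := by
    have h := hS (μ ^ 2 * m ^ e * xLine q)
      (((hμm 2 e).mul (isBihomogeneous_xForm _ _)).of_eq rfl rfl)
    rwa [← mul_assoc, localConditions_mul_of_eval_eq_zero (eval_xLine_self q), xLine,
      localConditions_xForm, S.smul_mem_iff hc] at h
  have h₂ : ![0, 0, 1] ∈ S := by
    have h := hS (μ ^ 3 * m ^ (e - 1) * yLine q)
      (((hμm 3 (e - 1)).mul (isBihomogeneous_yForm _ _)).of_eq rfl (by omega))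
    rwa [← mul_assoc, localConditions_mul_of_eval_eq_zero (eval_yLine_self q), yLine,
      localConditions_yForm, smul_smul, S.smul_mem_iff hD] at h
  have h₃ := hS _ (hμm 3 e)
  have hx : x ∈ S := by
    rw [Submodule.eq_top_of_mem_fin_three h₁ h₂ h₃ ?_]
    · exact Submodule.mem_top
    rw [localConditions_mul_euler hQ (hμm 3 e).1]
    simp [hQq, hμ, hm]
  obtain ⟨g, hg, rfl⟩ := hx
  exact ⟨g, hg, rfl⟩

section Points

variable {ι : Type*} [Fintype ι] [DecidableEq ι] (p : ι → Fin 4 → ℂ)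

def otherLinesSq (j : ι) : MvPolynomial (Fin 4) ℂ :=
  ∏ j' ∈ Finset.univ.erase j, yLine (p j') ^ 2

lemma isBihomogeneous_otherLinesSq (j : ι) :
    IsBihomogeneous (otherLinesSq p j) 0 (2 * (Fintype.card ι - 1)) := by
  refine (IsBihomogeneous.prod _ fun j' _ => (isBihomogeneous_yForm _ _).pow 2).of_eq ?_ ?_
  · ring
  · rw [Finset.card_erase_of_mem (Finset.mem_univ j), Finset.card_univ]
    ring

lemma eval_otherLinesSq_ne_zero (hdist : ∀ j j', j ≠ j' → p j 2 * p j' 3 ≠ p j' 2 * p j 3)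
    (j : ι) : eval (p j) (otherLinesSq p j) ≠ 0 := by
  rw [otherLinesSq, map_prod, Finset.prod_ne_zero_iff]
  intro j' hj'
  have h := hdist j' j (Finset.ne_of_mem_erase hj')
  simp only [yLine, map_pow, eval_yForm]
  exact pow_ne_zero 2 fun h' => h (by linear_combination -h')

lemma localConditions_otherLinesSq_mul {j j' : ι} (hj : j' ≠ j) (g : MvPolynomial (Fin 4) ℂ) :
    localConditions (p j') (otherLinesSq p j * g) = 0 := by
  rw [otherLinesSq, ← Finset.mul_prod_erase _ _ (Finset.mem_erase.mpr ⟨hj, Finset.mem_univ j'⟩),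
    mul_assoc]
  exact localConditions_sq_mul_of_eval_eq_zero (eval_yLine_self _) _

variable {p}

lemma exists_mem_W_singularityMap_eq_single (hpx : ∀ j, (p j 0, p j 1) ≠ (0, 0))
    (hpy : ∀ j, (p j 2, p j 3) ≠ (0, 0))
    (hdist : ∀ j j', j ≠ j' → p j 2 * p j' 3 ≠ p j' 2 * p j 3) {d : ℕ}
    (hd : 2 * Fintype.card ι ≤ d + 1) (j : ι) (x : Fin 3 → ℂ) :
    ∃ f ∈ W d, singularityMap p f = Pi.single j x := by
  have hcard : 0 < Fintype.card ι := Fintype.card_pos_iff.mpr ⟨j⟩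
  have hQ := isBihomogeneous_otherLinesSq p j
  obtain ⟨g, hg, hgx⟩ := exists_mem_W_localConditions_mul_eq (hpx j) (hpy j) hQ.1
    (eval_otherLinesSq_ne_zero p hdist j) (e := d - 2 * (Fintype.card ι - 1)) (by omega) x
  refine ⟨otherLinesSq p j * g, (hQ.mul hg).of_eq rfl (by omega), funext fun j' => ?_⟩
  rcases eq_or_ne j' j with rfl | hj'
  · simpa [singularityMap] using hgx
  · simp [singularityMap, hj', localConditions_otherLinesSq_mul p hj']

lemma surjective_singularityMap_comp_subtype (hpx : ∀ j, (p j 0, p j 1) ≠ (0, 0))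
    (hpy : ∀ j, (p j 2, p j 3) ≠ (0, 0))
    (hdist : ∀ j j', j ≠ j' → p j 2 * p j' 3 ≠ p j' 2 * p j 3) {d : ℕ}
    (hd : 2 * Fintype.card ι ≤ d + 1) :
    Function.Surjective (singularityMap p ∘ₗ (W d).subtype) := by
  rw [← LinearMap.range_eq_top, Submodule.eq_top_iff']
  intro v
  rw [← Finset.univ_sum_single v]
  refine Submodule.sum_mem _ fun j _ => ?_
  obtain ⟨f, hf, hfv⟩ := exists_mem_W_singularityMap_eq_single hpx hpy hdist hd j (v j)
  exact ⟨⟨f, hf⟩, hfv⟩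

end Points

theorem finrank_singular_subspace_P1P1_general (N d : ℕ) (hd : 2 * N - 1 ≤ d)
    (p : Fin N → Fin 4 → ℂ)
    (hpx : ∀ j, (p j 0, p j 1) ≠ (0, 0))
    (hpy : ∀ j, (p j 2, p j 3) ≠ (0, 0))
    (hdist : ∀ j j', j ≠ j' → p j 2 * p j' 3 ≠ p j' 2 * p j 3) :
    Module.finrank ℂ ↥(W d ⊓ singSub p) = 4 * (d + 1) - 3 * N := by
  have hker : W d ⊓ singSub p =
      (LinearMap.ker (singularityMap p ∘ₗ (W d).subtype)).map (W d).subtype := by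
    rw [W_inf_singSub d p hpy, LinearMap.ker_comp, Submodule.map_comap_subtype]
  have hsurj := surjective_singularityMap_comp_subtype hpx hpy hdist (d := d) (by simp; omega)
  have hrank := LinearMap.finrank_range_add_finrank_ker (singularityMap p ∘ₗ (W d).subtype)
  rw [LinearMap.range_eq_top.mpr hsurj, finrank_top, Module.finrank_pi_fintype, finrank_W] at hrank
  rw [hker, Submodule.finrank_map_subtype_eq]
  simp at hrank
  omega

/-- For `N ≥ 1`, `d ≥ 2N - 1`, and `N` points of `ℙ¹ × ℙ¹` lying on pairwise distinct lines
of the ruling, the subspace of `W_d` of polynomials singular at all `N` points has dimension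
`4(d+1) - 3N`. -/
theorem finrank_singular_subspace_P1P1 (N d : ℕ) (hN : 1 ≤ N) (hd : 2 * N - 1 ≤ d)
    (p : Fin N → Fin 4 → ℂ)
    (hpx : ∀ j, (p j 0, p j 1) ≠ (0, 0))
    (hpy : ∀ j, (p j 2, p j 3) ≠ (0, 0))
    (hdist : ∀ j j', j ≠ j' → p j 2 * p j' 3 ≠ p j' 2 * p j 3) :
    Module.finrank ℂ ↥(W d ⊓ singSub p) = 4 * (d + 1) - 3 * N :=
  finrank_singular_subspace_P1P1_general N d hd p hpx hpy hdist

end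
end

section
/- Let n ≥ 1 and d ≥ 1 be integers and let f ∈ V_{d,n}. Let (a,b) ∈ ℂ² with (a,b) ≠ (0,0), and let z_1 ≠ z_2 be complex numbers. If f is singular at both points p_1 = (a, b, z_1) and p_2 = (a, b, z_2) (two distinct points of the fiber of the ruling of 𝔽_n over [a:b], neither on E_n), then the linear form b·x − a·y divides f in ℂ[x,y,z]. -/
open MvPolynomial

noncomputable section

section helpers

lemma eval_ringHom_aeval {S : Type*} [CommSemiring S] [Algebra ℂ S] (ρ : S →+* ℂ)
    (hρ : ∀ c : ℂ, ρ (algebraMap ℂ S c) = c) (v : Fin 3 → S) (f : MvPolynomial (Fin 3) ℂ) :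
    ρ (MvPolynomial.aeval v f) = eval (fun i => ρ (v i)) f := by
  induction f using MvPolynomial.induction_on with
  | C c => simp [hρ c]
  | add p q hp hq => simp [map_add, hp, hq]
  | mul_X p i hp => simp [map_mul, hp]

lemma X_sub_dvd (i : Fin 3) (g : MvPolynomial (Fin 3) ℂ) (f : MvPolynomial (Fin 3) ℂ) :
    (X i - g) ∣ f - MvPolynomial.aeval (Function.update X i g) f := by
  induction f using MvPolynomial.induction_on with
  | C c => simp
  | add p q hp hq =>
      have : p + q - aeval (Function.update X i g) (p + q)
          = (p - aeval (Function.update X i g) p) + (q - aeval (Function.update X i g) q) := by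
        rw [map_add]; ring
      rw [this]; exact dvd_add hp hq
  | mul_X p j hp =>
      have key : p * X j - aeval (Function.update X i g) (p * X j)
          = (p - aeval (Function.update X i g) p) * X j
            + aeval (Function.update X i g) p * (X j - Function.update X i g j) := by
        rw [map_mul, aeval_X]; ring
      rw [key]
      refine dvd_add (hp.mul_right _) ?_
      by_cases hji : j = i
      · subst hji; rw [Function.update_self]; exact Dvd.intro_left _ rfl
      · rw [Function.update_of_ne hji]; simp

lemma eval_scale {w : Fin 3 → ℕ} {dd : ℕ} {f : MvPolynomial (Fin 3) ℂ}
    (hf : f.IsWeightedHomogeneous w dd) (t : ℂ) (p : Fin 3 → ℂ) :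
    eval (fun i => t ^ w i * p i) f = t ^ dd * eval p f := by
  conv_lhs => rw [f.as_sum]
  conv_rhs => rw [f.as_sum]
  rw [map_sum, map_sum, Finset.mul_sum]
  refine Finset.sum_congr rfl fun m hm => ?_
  have hw : Finsupp.weight w m = dd := hf (mem_support_iff.mp hm)
  rw [eval_monomial, eval_monomial]
  have h1 : (m.prod fun i k => (t ^ w i * p i) ^ k)
      = (m.prod fun i k => (t ^ (w i * k))) * (m.prod fun i k => p i ^ k) := by
    rw [← Finsupp.prod_mul]
    refine Finsupp.prod_congr fun i _ => ?_
    rw [mul_pow, pow_mul]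
  have h2 : (m.prod fun i k => t ^ (w i * k)) = t ^ dd := by
    rw [← hw, Finsupp.prod, Finset.prod_pow_eq_pow_sum, Finsupp.weight_apply, Finsupp.sum]
    congr 1
    exact Finset.sum_congr rfl fun i _ => by rw [smul_eq_mul, mul_comm]
  rw [h1, h2]; ring

lemma euler_mono (w : Fin 3 → ℕ) (m : Fin 3 →₀ ℕ) (c : ℂ) (i : Fin 3) :
    C (w i : ℂ) * X i * pderiv i (monomial m c) = monomial m (((w i * m i : ℕ) : ℂ) * c) := by
  rw [pderiv_monomial]
  by_cases hmi : m i = 0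
  · simp [hmi]
  · have he : Finsupp.single i 1 + (m - Finsupp.single i 1) = m := by
      ext j
      by_cases hj : j = i
      · subst hj
        simp only [Finsupp.add_apply, Finsupp.single_apply, Finsupp.tsub_apply, if_true,
          eq_self_iff_true]
        omega
      · simp [Finsupp.single_apply, Ne.symm hj]
    have : X i * monomial (m - Finsupp.single i 1) (c * m i) = monomial m (c * m i) := by
      rw [X, monomial_mul, he, one_mul]
    rw [mul_assoc, this, C_mul_monomial]
    push_cast
    ring_nf

lemma euler {w : Fin 3 → ℕ} {dd : ℕ} {f : MvPolynomial (Fin 3) ℂ}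
    (hf : f.IsWeightedHomogeneous w dd) :
    ∑ i, C (w i : ℂ) * X i * pderiv i f = C (dd : ℂ) * f := by
  conv_lhs => rw [f.as_sum]
  conv_rhs => rw [f.as_sum]
  simp only [map_sum, Finset.mul_sum]
  rw [Finset.sum_comm]
  refine Finset.sum_congr rfl fun m hm => ?_
  have hw : Finsupp.weight w m = dd := hf (mem_support_iff.mp hm)
  simp only [euler_mono, C_mul_monomial]
  have : ∑ x : Fin 3, (monomial m) (((w x * m x : ℕ) : ℂ) * coeff m f)
      = monomial m ((∑ x : Fin 3, ((w x * m x : ℕ) : ℂ)) * coeff m f) := by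
    rw [Finset.sum_mul, map_sum]
  rw [this]
  congr 2
  have hsum : ∑ x : Fin 3, w x * m x = dd := by
    rw [← hw, Finsupp.weight_apply, Finsupp.sum_fintype]
    · exact Finset.sum_congr rfl fun i _ => by rw [smul_eq_mul, mul_comm]
    · intro i; simp
  rw [← hsum]
  push_cast
  rfl

lemma deriv_theta (a b : ℂ) (f : MvPolynomial (Fin 3) ℂ) :
    Polynomial.derivative (MvPolynomial.aeval ![Polynomial.C a, Polynomial.C b, Polynomial.X] f)
      = MvPolynomial.aeval ![Polynomial.C a, Polynomial.C b, Polynomial.X] (pderiv 2 f) := by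
  induction f using MvPolynomial.induction_on with
  | C c => simp
  | add p q hp hq => simp [hp, hq]
  | mul_X p i hp =>
      rw [map_mul, Polynomial.derivative_mul, hp, pderiv_mul, map_add, map_mul, map_mul]
      congr 1
      fin_cases i <;> simp [Matrix.cons_val_zero, Matrix.cons_val_one]

lemma natDegree_theta (a b : ℂ) (f : MvPolynomial (Fin 3) ℂ) :
    (MvPolynomial.aeval ![Polynomial.C a, Polynomial.C b, Polynomial.X] f).natDegree
      ≤ f.degreeOf 2 := by
  conv_lhs => rw [f.as_sum]
  rw [map_sum]
  refine Polynomial.natDegree_sum_le_of_forall_le _ _ fun m hm => ?_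
  have h2 : m 2 ≤ f.degreeOf 2 := monomial_le_degreeOf 2 hm
  refine le_trans ?_ h2
  rw [aeval_monomial, Finsupp.prod_fintype _ _ (fun i => pow_zero _), Fin.prod_univ_three]
  simp only [Matrix.cons_val_zero, Matrix.cons_val_one, Matrix.head_cons, Matrix.cons_val_two,
    Matrix.tail_cons]
  calc (algebraMap ℂ (Polynomial ℂ) (coeff m f)
        * (Polynomial.C a ^ m 0 * Polynomial.C b ^ m 1 * Polynomial.X ^ m 2)).natDegree
      ≤ 0 + (0 + 0 + m 2) := by
        refine Polynomial.natDegree_mul_le.trans (add_le_add ?_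
          (Polynomial.natDegree_mul_le.trans (add_le_add
            (Polynomial.natDegree_mul_le.trans (add_le_add ?_ ?_)) ?_)))
        · simp [Polynomial.algebraMap_eq]
        · simp [Polynomial.natDegree_pow]
        · simp [Polynomial.natDegree_pow]
        · simp
    _ ≤ m 2 := by omega

lemma double_root_dvd {g : Polynomial ℂ} {z : ℂ} (h0 : g.eval z = 0)
    (h1 : (Polynomial.derivative g).eval z = 0) : (Polynomial.X - Polynomial.C z) ^ 2 ∣ g := by
  obtain ⟨q, hq⟩ := (Polynomial.dvd_iff_isRoot.mpr h0)
  have hq' : q.eval z = 0 := by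
    have := h1
    rw [hq, Polynomial.derivative_mul] at this
    simpa using this
  obtain ⟨r, hr⟩ := Polynomial.dvd_iff_isRoot.mpr hq'
  exact ⟨r, by rw [hq, hr]; ring⟩

lemma g_eq_zero {g : Polynomial ℂ} {z₁ z₂ : ℂ} (hz : z₁ ≠ z₂) (hdeg : g.natDegree ≤ 3)
    (h1 : (Polynomial.X - Polynomial.C z₁) ^ 2 ∣ g)
    (h2 : (Polynomial.X - Polynomial.C z₂) ^ 2 ∣ g) :
    g = 0 := by
  by_contra hg
  have hcop : IsCoprime ((Polynomial.X - Polynomial.C z₁) ^ 2)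
      ((Polynomial.X - Polynomial.C z₂) ^ 2) :=
    (Polynomial.isCoprime_X_sub_C_of_isUnit_sub ((sub_ne_zero_of_ne hz).isUnit)).pow
  have hd : ((Polynomial.X - Polynomial.C z₁) ^ 2 * (Polynomial.X - Polynomial.C z₂) ^ 2) ∣ g :=
    hcop.mul_dvd h1 h2
  have h4 : ((Polynomial.X - Polynomial.C z₁) ^ 2
      * (Polynomial.X - Polynomial.C z₂) ^ 2).natDegree = 4 := by
    rw [Polynomial.natDegree_mul (pow_ne_zero 2 (Polynomial.X_sub_C_ne_zero z₁))
      (pow_ne_zero 2 (Polynomial.X_sub_C_ne_zero z₂))]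
    simp [Polynomial.natDegree_pow, Polynomial.natDegree_X_sub_C]
  have := Polynomial.natDegree_le_of_dvd hd hg
  omega

end helpers

/-- If `f ∈ V_{d,n}` is singular at two distinct points `(a, b, z₁)`, `(a, b, z₂)` of the
fiber of the ruling of `𝔽ₙ` over `[a : b]`, neither on `Eₙ`, then the equation `b·x - a·y`
of that fiber divides `f`. -/
theorem fiber_divides (n d : ℕ) (hn : 1 ≤ n) (hd : 1 ≤ d)
    (f : MvPolynomial (Fin 3) ℂ) (hf : f ∈ V d n)
    (a b : ℂ) (hab : (a, b) ≠ (0, 0)) (z₁ z₂ : ℂ) (hz : z₁ ≠ z₂)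
    (h1 : SingularAt f ![a, b, z₁]) (h2 : SingularAt f ![a, b, z₂]) :
    (C b * X 0 - C a * X 1) ∣ f := by
  have hWH : f.IsWeightedHomogeneous (wt n) d := (Submodule.mem_inf.mp hf).1
  have hdeg : f.degreeOf 2 ≤ 3 := (Submodule.mem_inf.mp hf).2
  have hd' : (d : ℂ) ≠ 0 := Nat.cast_ne_zero.mpr (by omega)
  -- Euler ⇒ f vanishes at singular points
  have heval0 : ∀ z : ℂ, SingularAt f ![a, b, z] → eval ![a, b, z] f = 0 := by
    intro z hs
    have h0 := congrArg (eval ![a, b, z]) (euler hWH)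
    simp only [Fin.sum_univ_three, map_add, map_mul, eval_C, eval_X, hs 0, hs 1, hs 2,
      mul_zero, add_zero, zero_add] at h0
    exact (mul_eq_zero.mp h0.symm).resolve_left hd'
  -- the restriction of f to the fiber, as a one-variable polynomial
  set v : Fin 3 → Polynomial ℂ := ![Polynomial.C a, Polynomial.C b, Polynomial.X] with hv
  have hgeval : ∀ (z : ℂ) (p : MvPolynomial (Fin 3) ℂ),
      (MvPolynomial.aeval v p).eval z = eval ![a, b, z] p := by
    intro z p
    have h := eval_ringHom_aeval (Polynomial.evalRingHom z) (by simp) v p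
    have hfun : (fun i => (Polynomial.evalRingHom z) (v i)) = ![a, b, z] := by
      funext i; fin_cases i <;> simp [hv]
    rw [hfun] at h
    exact h
  -- the fiber polynomial is identically zero
  have hg0 : MvPolynomial.aeval v f = 0 := by
    refine g_eq_zero hz ((natDegree_theta a b f).trans hdeg) ?_ ?_
    · refine double_root_dvd ?_ ?_
      · rw [hgeval]; exact heval0 z₁ h1
      · rw [show Polynomial.derivative (MvPolynomial.aeval v f)
            = MvPolynomial.aeval v (pderiv 2 f) from deriv_theta a b f, hgeval]
        exact h1 2
    · refine double_root_dvd ?_ ?_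
      · rw [hgeval]; exact heval0 z₂ h2
      · rw [show Polynomial.derivative (MvPolynomial.aeval v f)
            = MvPolynomial.aeval v (pderiv 2 f) from deriv_theta a b f, hgeval]
        exact h2 2
  have hfa : ∀ z : ℂ, eval ![a, b, z] f = 0 := by
    intro z
    rw [← hgeval z f, hg0, Polynomial.eval_zero]
  -- f vanishes on the whole plane spanned by the fiber
  have hfiber : ∀ t z : ℂ, eval ![t * a, t * b, z] f = 0 := by
    intro t z
    set w2 : Fin 3 → Polynomial ℂ :=
      ![Polynomial.X * Polynomial.C a, Polynomial.X * Polynomial.C b, Polynomial.C z] with hw2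
    have hq : ∀ s : ℂ, (MvPolynomial.aeval w2 f).eval s = eval ![s * a, s * b, z] f := by
      intro s
      have h := eval_ringHom_aeval (Polynomial.evalRingHom s) (by simp) w2 f
      have hfun : (fun i => (Polynomial.evalRingHom s) (w2 i)) = ![s * a, s * b, z] := by
        funext i; fin_cases i <;> simp [hw2] <;> ring
      rw [hfun] at h
      exact h
    have hqz : MvPolynomial.aeval w2 f = 0 := by
      apply Polynomial.eq_zero_of_infinite_isRoot
      refine Set.Infinite.mono ?_ ((Set.finite_singleton (0 : ℂ)).infinite_compl)
      intro s hs
      have hs' : s ≠ 0 := hs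
      show (MvPolynomial.aeval w2 f).eval s = 0
      rw [hq s]
      have hsc := eval_scale hWH s ![a, b, z / s ^ n]
      have hfun2 : (fun i => s ^ wt n i * (![a, b, z / s ^ n]) i) = ![s * a, s * b, z] := by
        funext i
        fin_cases i
        · simp [wt]
        · simp [wt]
        · simp only [wt, Matrix.cons_val_two, Matrix.tail_cons, Matrix.head_cons,
            Matrix.cons_val_zero, Matrix.cons_val_one]
          exact mul_div_cancel₀ z (pow_ne_zero n hs')
      rw [hfun2] at hsc
      rw [hsc, hfa (z / s ^ n), mul_zero]
    rw [← hq t, hqz, Polynomial.eval_zero]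
  -- now divide
  by_cases hb : b = 0
  · have ha : a ≠ 0 := by
      intro h0
      exact hab (by rw [h0, hb])
    obtain ⟨q, hq⟩ := X_sub_dvd 1 (C (b / a) * X 0) f
    have hsub : MvPolynomial.aeval (Function.update X 1 (C (b / a) * X 0)) f = 0 := by
      apply MvPolynomial.funext
      intro p
      have h := eval_ringHom_aeval (eval p) (by simp) (Function.update X 1 (C (b / a) * X 0)) f
      have hfun : (fun i => eval p (Function.update X 1 (C (b / a) * X 0) i))
          = ![(p 0 / a) * a, (p 0 / a) * b, p 2] := by
        funext i
        fin_cases i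
        · show eval p (Function.update X 1 (C (b / a) * X 0) 0) = p 0 / a * a
          rw [Function.update_of_ne (by decide)]
          rw [eval_X, div_mul_cancel₀ _ ha]
        · show eval p (Function.update X 1 (C (b / a) * X 0) 1) = p 0 / a * b
          rw [Function.update_self, eval_mul, eval_C, eval_X]
          ring
        · show eval p (Function.update X 1 (C (b / a) * X 0) 2) = p 2
          rw [Function.update_of_ne (by decide), eval_X]
      rw [hfun] at h
      show eval p _ = eval p 0
      rw [h, hfiber (p 0 / a) (p 2), map_zero]
    rw [hsub, sub_zero] at hq
    have hL : (C b * X 0 - C a * X 1 : MvPolynomial (Fin 3) ℂ)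
        = C (-a) * (X 1 - C (b / a) * X 0) := by
      have hba : a * (b / a) = b := by field_simp
      calc (C b * X 0 - C a * X 1 : MvPolynomial (Fin 3) ℂ)
          = C (a * (b / a)) * X 0 - C a * X 1 := by rw [hba]
        _ = C (-a) * (X 1 - C (b / a) * X 0) := by rw [C_mul, C_neg]; ring
    refine dvd_trans (dvd_of_eq hL) ?_
    rw [hq]
    have hCu : (C (-a) : MvPolynomial (Fin 3) ℂ) * C (-a)⁻¹ = 1 := by
      rw [← C_mul, mul_inv_cancel₀ (neg_ne_zero.mpr ha), C_1]
    refine ⟨C (-a)⁻¹ * q, ?_⟩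
    calc (X 1 - C (b / a) * X 0) * q = 1 * ((X 1 - C (b / a) * X 0) * q) := (one_mul _).symm
      _ = (C (-a) * C (-a)⁻¹) * ((X 1 - C (b / a) * X 0) * q) := by rw [hCu]
      _ = C (-a) * (X 1 - C (b / a) * X 0) * (C (-a)⁻¹ * q) := by ring
  · obtain ⟨q, hq⟩ := X_sub_dvd 0 (C (a / b) * X 1) f
    have hsub : MvPolynomial.aeval (Function.update X 0 (C (a / b) * X 1)) f = 0 := by
      apply MvPolynomial.funext
      intro p
      have h := eval_ringHom_aeval (eval p) (by simp) (Function.update X 0 (C (a / b) * X 1)) f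
      have hfun : (fun i => eval p (Function.update X 0 (C (a / b) * X 1) i))
          = ![(p 1 / b) * a, (p 1 / b) * b, p 2] := by
        funext i
        fin_cases i
        · show eval p (Function.update X 0 (C (a / b) * X 1) 0) = p 1 / b * a
          rw [Function.update_self, eval_mul, eval_C, eval_X]
          ring
        · show eval p (Function.update X 0 (C (a / b) * X 1) 1) = p 1 / b * b
          rw [Function.update_of_ne (by decide)]
          rw [eval_X, div_mul_cancel₀ _ hb]
        · show eval p (Function.update X 0 (C (a / b) * X 1) 2) = p 2
          rw [Function.update_of_ne (by decide), eval_X]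
      rw [hfun] at h
      show eval p _ = eval p 0
      rw [h, hfiber (p 1 / b) (p 2), map_zero]
    rw [hsub, sub_zero] at hq
    have hL : (C b * X 0 - C a * X 1 : MvPolynomial (Fin 3) ℂ)
        = C b * (X 0 - C (a / b) * X 1) := by
      have hba : b * (a / b) = a := by field_simp
      calc (C b * X 0 - C a * X 1 : MvPolynomial (Fin 3) ℂ)
          = C b * X 0 - C (b * (a / b)) * X 1 := by rw [hba]
        _ = C b * (X 0 - C (a / b) * X 1) := by rw [C_mul]; ring
    refine dvd_trans (dvd_of_eq hL) ?_
    rw [hq]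
    have hCu : (C b : MvPolynomial (Fin 3) ℂ) * C b⁻¹ = 1 := by
      rw [← C_mul, mul_inv_cancel₀ hb, C_1]
    refine ⟨C b⁻¹ * q, ?_⟩
    calc (X 0 - C (a / b) * X 1) * q = 1 * ((X 0 - C (a / b) * X 1) * q) := (one_mul _).symm
      _ = (C b * C b⁻¹) * ((X 0 - C (a / b) * X 1) * q) := by rw [hCu]
      _ = C b * (X 0 - C (a / b) * X 1) * (C b⁻¹ * q) := by ring


end
end
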